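/- Let Λ : ℍ → ℍ be a regular ℝ-linear map and let g ∈ 𝕊. Then Λ is complex linear of type (g,g) if and only if M_Λ(g,g) = 0. -/

import Mathlib

noncomputable section

open Quaternion Classical

/-- The imaginary unit `i`. -/
def qi : ℍ[ℝ] := ⟨0, 1, 0, 0⟩
/-- The imaginary unit `j`. -/
def qj : ℍ[ℝ] := ⟨0, 0, 1, 0⟩
/-- The imaginary unit `k`. -/
def qk : ℍ[ℝ] := ⟨0, 0, 0, 1⟩

/-- The 2-sphere of quaternionic imaginary units. -/
def sph : Set ℍ[ℝ] := {x | x ^ 2 = -1}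

/-- The real scalar product `⟨x, y⟩ = Re (x * ȳ)` on `ℍ`. -/
def qip (x y : ℍ[ℝ]) : ℝ := (x * star y).re

/-- `‖Λ‖²`, the squared norm of a real linear map `Λ : ℍ → ℍ`. -/
def normSqL (Λ : ℍ[ℝ] →ₗ[ℝ] ℍ[ℝ]) : ℝ :=
  (1 / 4) * (normSq (Λ 1) + normSq (Λ qi) + normSq (Λ qj) + normSq (Λ qk))

/-- The bilinear expression `A_Λ(p, q) = ⟨R_p ∘ Λ, Λ ∘ L_q⟩`. -/
def Aform (Λ : ℍ[ℝ] →ₗ[ℝ] ℍ[ℝ]) (p q : ℍ[ℝ]) : ℝ :=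
  (1 / 4) * (qip (Λ 1 * p) (Λ (q * 1)) + qip (Λ qi * p) (Λ (q * qi))
    + qip (Λ qj * p) (Λ (q * qj)) + qip (Λ qk * p) (Λ (q * qk)))

/-- The trace of the bilinear form `A_Λ` on `Im ℍ`. -/
def trA (Λ : ℍ[ℝ] →ₗ[ℝ] ℍ[ℝ]) : ℝ := Aform Λ qi qi + Aform Λ qj qj + Aform Λ qk qk

/-- The bilinear form `M_Λ(p,q) = (1/2) tr(A_Λ) ⟨p,q⟩ - (1/2) A_Λ(p,q)`. -/
def Mform (Λ : ℍ[ℝ] →ₗ[ℝ] ℍ[ℝ]) (p q : ℍ[ℝ]) : ℝ :=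
  (1 / 2) * trA Λ * qip p q - (1 / 2) * Aform Λ p q

/-- `Λ` is complex linear of type `(g, h)` if `Λ(g x) = Λ(x) h` for all `x`. -/
def IsCLType (Λ : ℍ[ℝ] →ₗ[ℝ] ℍ[ℝ]) (g h : ℍ[ℝ]) : Prop := ∀ x, Λ (g * x) = Λ x * h

/-- `Λ` is regular (right Fueter-regular). -/
def IsReg (Λ : ℍ[ℝ] →ₗ[ℝ] ℍ[ℝ]) : Prop :=
  Λ 1 * 1 + Λ qi * qi + Λ qj * qj + Λ qk * qk = 0

/-- The antiautomorphism-type map `θ̄_p(x) = p x̄ p⁻¹` as a real linear map. -/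
def thetaBar (p : ℍ[ℝ]) : ℍ[ℝ] →ₗ[ℝ] ℍ[ℝ] where
  toFun x := p * star x * p⁻¹
  map_add' x y := by simp [star_add, mul_add, add_mul]
  map_smul' r x := by simp [mul_smul_comm, smul_mul_assoc]

/-- Left multiplication by a quaternion, as a real linear map. -/
def lmul (a : ℍ[ℝ]) : ℍ[ℝ] →ₗ[ℝ] ℍ[ℝ] := LinearMap.mulLeft ℝ a

/-- The size `s(Λ)` of a (regular) real linear map: the minimal number of nonzero
coefficients `λ₁, λ₂, λ₃` in a decomposition `Λ = λ₁ θ̄_{e₁} + λ₂ θ̄_{e₂} + λ₃ θ̄_{e₃}`,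
over all triples of pairwise orthogonal imaginary units `e₁, e₂, e₃`. -/
def qsize (Λ : ℍ[ℝ] →ₗ[ℝ] ℍ[ℝ]) : ℕ :=
  sInf { n | ∃ e₁ e₂ e₃ l₁ l₂ l₃ : ℍ[ℝ],
    e₁ ∈ sph ∧ e₂ ∈ sph ∧ e₃ ∈ sph ∧
    qip e₁ e₂ = 0 ∧ qip e₁ e₃ = 0 ∧ qip e₂ e₃ = 0 ∧
    Λ = (lmul l₁).comp (thetaBar e₁) + (lmul l₂).comp (thetaBar e₂)
        + (lmul l₃).comp (thetaBar e₃) ∧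
    n = (if l₁ = 0 then 0 else 1) + (if l₂ = 0 then 0 else 1) + (if l₃ = 0 then 0 else 1) }

/-- The 3×3 matrix of `M_Λ` with respect to the basis `(i, j, k)` of `Im ℍ`. -/
def Mmat (Λ : ℍ[ℝ] →ₗ[ℝ] ℍ[ℝ]) : Matrix (Fin 3) (Fin 3) ℝ :=
  Matrix.of fun α β => Mform Λ (![qi, qj, qk] α) (![qi, qj, qk] β)

/-- The basis `(1, i, j, k)` of `ℍ` over `ℝ`. -/
def qBasis : Module.Basis (Fin 4) ℝ ℍ[ℝ] := QuaternionAlgebra.basisOneIJK (-1) 0 (-1)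

/-- The adjugate `Λ^adjg` of a real linear map `Λ : ℍ → ℍ`: the linear map whose matrix
with respect to the basis `(1, i, j, k)` is the adjugate of the matrix of `Λ`. -/
def adjg (Λ : ℍ[ℝ] →ₗ[ℝ] ℍ[ℝ]) : ℍ[ℝ] →ₗ[ℝ] ℍ[ℝ] :=
  Matrix.toLin qBasis qBasis (Matrix.adjugate (LinearMap.toMatrix qBasis qBasis Λ))

/-- The embedding `ℂ → ℍ`, `x + √-1 y ↦ x + y i`. -/
def iotaC (z : ℂ) : ℍ[ℝ] := ⟨z.re, z.im, 0, 0⟩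

/-- The map `L_Λ : Im ℍ → Im ℍ` representing `A_Λ`: `⟨p, L_Λ(q)⟩ = A_Λ(p, q)`. -/
def LLam (Λ : ℍ[ℝ] →ₗ[ℝ] ℍ[ℝ]) (q : ℍ[ℝ]) : ℍ[ℝ] :=
  Aform Λ qi q • qi + Aform Λ qj q • qj + Aform Λ qk q • qk

/-- The quadratic form `Q_Λ(q) = |L_Λ(q)|²`. -/
def QLam (Λ : ℍ[ℝ] →ₗ[ℝ] ℍ[ℝ]) (q : ℍ[ℝ]) : ℝ := normSq (LLam Λ q)

/-! For regular `Λ` the trace of `A_Λ` equals `‖Λ‖²`, since in general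
`|Λ(1)·1 + Λ(i)·i + Λ(j)·j + Λ(k)·k|² = 4‖Λ‖² − 4 tr(A_Λ)`. Expanding the squares in
`∑_e |Λ(e)·g − Λ(g·e)|²`, and using that left multiplication by `g` scales the Hilbert–Schmidt
norm by `|g|`, this sum equals `8|g|²‖Λ‖² − 8 A_Λ(g,g) = 16 M_Λ(g,g)`. It vanishes iff
`Λ(g·e) = Λ(e)·g` on the basis `e ∈ {1, i, j, k}`, i.e. iff `Λ` is complex linear of type
`(g,g)`. -/

open Quaternion

lemma qip_self (a : ℍ[ℝ]) : qip a a = normSq a := by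
  rw [qip, self_mul_star, re_coe]

lemma normSq_sub_eq (a b : ℍ[ℝ]) : normSq (a - b) = normSq a + normSq b - 2 * qip a b := by
  simp only [normSq_def', qip, re_mul, re_sub, imI_sub, imJ_sub, imK_sub, re_star, imI_star,
    imJ_star, imK_star]
  ring

lemma eq_re_smul_one_add (x : ℍ[ℝ]) : x = x.re • 1 + x.imI • qi + x.imJ • qj + x.imK • qk := by
  ext <;>
    simp only [re_add, imI_add, imJ_add, imK_add, re_smul, imI_smul, imJ_smul, imK_smul,
      re_one, imI_one, imJ_one, imK_one, smul_eq_mul] <;>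
    simp only [qi, qj, qk] <;>
    ring

lemma LinearMap.apply_quaternion {M : Type*} [AddCommMonoid M] [Module ℝ M]
    (f : ℍ[ℝ] →ₗ[ℝ] M) (x : ℍ[ℝ]) :
    f x = x.re • f 1 + x.imI • f qi + x.imJ • f qj + x.imK • f qk := by
  conv_lhs => rw [eq_re_smul_one_add x]
  simp only [map_add, map_smul]

lemma normSq_apply_mul_basis_sum (Λ : ℍ[ℝ] →ₗ[ℝ] ℍ[ℝ]) :
    normSq (Λ 1 * 1 + Λ qi * qi + Λ qj * qj + Λ qk * qk) = 4 * normSqL Λ - 4 * trA Λ := by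
  simp only [normSqL, trA, Aform, qip, mul_one]
  rw [Λ.apply_quaternion (qi * qi), Λ.apply_quaternion (qi * qj), Λ.apply_quaternion (qi * qk),
    Λ.apply_quaternion (qj * qi), Λ.apply_quaternion (qj * qj), Λ.apply_quaternion (qj * qk),
    Λ.apply_quaternion (qk * qi), Λ.apply_quaternion (qk * qj), Λ.apply_quaternion (qk * qk)]
  generalize Λ 1 = a, Λ qi = b, Λ qj = c, Λ qk = d
  simp only [normSq_def', re_mul, imI_mul, imJ_mul, imK_mul, re_add, imI_add, imJ_add, imK_add,
    re_smul, imI_smul, imJ_smul, imK_smul, re_star, imI_star, imJ_star, imK_star, smul_eq_mul]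
  simp only [qi, qj, qk]
  ring

lemma IsReg.trA_eq_normSqL {Λ : ℍ[ℝ] →ₗ[ℝ] ℍ[ℝ]} (hreg : IsReg Λ) : trA Λ = normSqL Λ := by
  have h := normSq_apply_mul_basis_sum Λ
  rw [hreg, map_zero] at h
  linarith

/-- Left multiplication by `g` is `|g|` times an orthogonal map. -/
lemma sum_normSq_apply_mul_left (Λ : ℍ[ℝ] →ₗ[ℝ] ℍ[ℝ]) (g : ℍ[ℝ]) :
    normSq (Λ (g * 1)) + normSq (Λ (g * qi)) + normSq (Λ (g * qj)) + normSq (Λ (g * qk))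
      = normSq g * (normSq (Λ 1) + normSq (Λ qi) + normSq (Λ qj) + normSq (Λ qk)) := by
  rw [Λ.apply_quaternion (g * 1), Λ.apply_quaternion (g * qi), Λ.apply_quaternion (g * qj),
    Λ.apply_quaternion (g * qk)]
  generalize Λ 1 = a, Λ qi = b, Λ qj = c, Λ qk = d
  simp only [normSq_def', re_mul, imI_mul, imJ_mul, imK_mul, re_add, imI_add, imJ_add, imK_add,
    re_smul, imI_smul, imJ_smul, imK_smul, smul_eq_mul, mul_one]
  simp only [qi, qj, qk]
  ring

lemma isCLType_iff (Λ : ℍ[ℝ] →ₗ[ℝ] ℍ[ℝ]) (g h : ℍ[ℝ]) :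
    IsCLType Λ g h ↔ Λ (g * 1) = Λ 1 * h ∧ Λ (g * qi) = Λ qi * h ∧ Λ (g * qj) = Λ qj * h ∧
      Λ (g * qk) = Λ qk * h := by
  refine ⟨fun H => ⟨H 1, H qi, H qj, H qk⟩, fun ⟨h1, hi, hj, hk⟩ x => ?_⟩
  calc Λ (g * x) = (Λ ∘ₗ LinearMap.mulLeft ℝ g) x := rfl
    _ = x.re • Λ (g * 1) + x.imI • Λ (g * qi) + x.imJ • Λ (g * qj) + x.imK • Λ (g * qk) :=
      (Λ ∘ₗ LinearMap.mulLeft ℝ g).apply_quaternion x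
    _ = x.re • (Λ 1 * h) + x.imI • (Λ qi * h) + x.imJ • (Λ qj * h) + x.imK • (Λ qk * h) := by
      rw [h1, hi, hj, hk]
    _ = (LinearMap.mulRight ℝ h ∘ₗ Λ) x := ((LinearMap.mulRight ℝ h ∘ₗ Λ).apply_quaternion x).symm
    _ = Λ x * h := rfl

def clDefect (Λ : ℍ[ℝ] →ₗ[ℝ] ℍ[ℝ]) (g h : ℍ[ℝ]) : ℝ :=
  normSq (Λ 1 * h - Λ (g * 1)) + normSq (Λ qi * h - Λ (g * qi))
    + normSq (Λ qj * h - Λ (g * qj)) + normSq (Λ qk * h - Λ (g * qk))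

lemma clDefect_eq_zero_iff (Λ : ℍ[ℝ] →ₗ[ℝ] ℍ[ℝ]) (g h : ℍ[ℝ]) :
    clDefect Λ g h = 0 ↔ IsCLType Λ g h := by
  have n1 := normSq_nonneg (a := Λ 1 * h - Λ (g * 1))
  have ni := normSq_nonneg (a := Λ qi * h - Λ (g * qi))
  have nj := normSq_nonneg (a := Λ qj * h - Λ (g * qj))
  have nk := normSq_nonneg (a := Λ qk * h - Λ (g * qk))
  simp only [isCLType_iff, @eq_comm _ (Λ (g * _)), ← sub_eq_zero (a := _ * h),
    ← normSq_eq_zero (a := _ - _), clDefect]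
  constructor
  · intro H
    refine ⟨?_, ?_, ?_, ?_⟩ <;> linarith
  · rintro ⟨h1, hi, hj, hk⟩
    rw [h1, hi, hj, hk]
    norm_num

lemma clDefect_self_eq (Λ : ℍ[ℝ] →ₗ[ℝ] ℍ[ℝ]) (g : ℍ[ℝ]) :
    clDefect Λ g g = 8 * normSq g * normSqL Λ - 8 * Aform Λ g g := by
  have hleft := sum_normSq_apply_mul_left Λ g
  simp only [clDefect, normSq_sub_eq, map_mul, normSqL, Aform]
  linarith

lemma IsReg.clDefect_self {Λ : ℍ[ℝ] →ₗ[ℝ] ℍ[ℝ]} (hreg : IsReg Λ) (g : ℍ[ℝ]) :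
    clDefect Λ g g = 16 * Mform Λ g g := by
  rw [clDefect_self_eq, Mform, hreg.trA_eq_normSqL, qip_self]
  ring

theorem stmt7_general (Λ : ℍ[ℝ] →ₗ[ℝ] ℍ[ℝ]) (hreg : IsReg Λ) (g : ℍ[ℝ]) :
    IsCLType Λ g g ↔ Mform Λ g g = 0 := by
  rw [← clDefect_eq_zero_iff, hreg.clDefect_self]
  constructor <;> intro h <;> linarith

/-- For a regular real linear map `Λ` and `g ∈ 𝕊`, `Λ` is complex linear of type `(g,g)`
if and only if `M_Λ(g,g) = 0`. -/
theorem stmt7 (Λ : ℍ[ℝ] →ₗ[ℝ] ℍ[ℝ]) (hreg : IsReg Λ) (g : ℍ[ℝ]) (hg : g ∈ sph) :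
    IsCLType Λ g g ↔ Mform Λ g g = 0 :=
  stmt7_general Λ hreg g

end
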